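/- Let (U, V) be a centered bivariate Gaussian random vector with covariance matrix [[σ₁₁, σ₁₂], [σ₁₂, σ₂₂]], where σ₁₁ > 0 and σ₂₂ > 0 and the matrix is positive semidefinite. Then for all integers k, l ≥ 0, E[H_k(U/√σ₁₁) · H_l(V/√σ₂₂)] = (σ₁₂/√(σ₁₁σ₂₂))^k if k = l, and = 0 if k ≠ l. -/

import Mathlib

/-!
After normalising, `(X, Y) = (U / √σ₁₁, V / √σ₂₂)` has the same one-dimensional projections as
`(Z₁, ρ Z₁ + √(1 - ρ²) Z₂)`, where `Z₁, Z₂` are independent standard Gaussians and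
`ρ = σ₁₂ / √(σ₁₁ σ₂₂)`; hence both have the same characteristic function and the same law.
In this model, Gaussian integration by parts in `Z₁` (Stein's identity `E[Z P(Z)] = E[P'(Z)]`)
together with `He_{k+1} = X He_k - He_k'` gives `E[He_{k+1}(X) Q(Y)] = ρ E[He_k(X) Q'(Y)]` for every
polynomial `Q`. Since `He_l' = l He_{l-1}`, induction on `k` reduces `E[He_k(X) He_l(Y)]` to
`E[He_l(Y)] = δ_{l0}`, which yields `δ_{kl} k! ρ^k`.
-/

open MeasureTheory ProbabilityTheory

/-- `Polynomial.hermite` is the probabilists' Hermite polynomial. -/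
noncomputable def normHermite (k : ℕ) (t : ℝ) : ℝ :=
  Polynomial.aeval t (Polynomial.hermite k) / Real.sqrt (Nat.factorial k)

open Polynomial Real
open scoped NNReal Nat

namespace Polynomial

variable {α : Type*} {m : MeasurableSpace α} {μ : Measure α}

theorem integrable_eval_comp {f : α → ℝ} (hf : ∀ n : ℕ, Integrable (fun a ↦ f a ^ n) μ)
    (P : ℝ[X]) : Integrable (fun a ↦ P.eval (f a)) μ := by
  simp_rw [eval_eq_sum_range]
  exact integrable_finsetSum _ fun i _ ↦ (hf i).const_mul _

theorem memLp_two_eval_comp {f : α → ℝ} (hf : ∀ n : ℕ, Integrable (fun a ↦ f a ^ n) μ)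
    (P : ℝ[X]) : MemLp (fun a ↦ P.eval (f a)) 2 μ := by
  have hmeas : AEStronglyMeasurable f μ := by simpa using (hf 1).aestronglyMeasurable
  rw [memLp_two_iff_integrable_sq (P.continuous.comp_aestronglyMeasurable hmeas)]
  exact (integrable_eval_comp hf (P ^ 2)).congr (ae_of_all _ fun _ ↦ eval_pow 2)

theorem integrable_eval_comp_mul_eval_comp {f g : α → ℝ}
    (hf : ∀ n : ℕ, Integrable (fun a ↦ f a ^ n) μ) (hg : ∀ n : ℕ, Integrable (fun a ↦ g a ^ n) μ)
    (P Q : ℝ[X]) : Integrable (fun a ↦ P.eval (f a) * Q.eval (g a)) μ :=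
  (memLp_two_eval_comp hf P).integrable_mul (memLp_two_eval_comp hg Q)

theorem derivative_hermite_succ (n : ℕ) :
    derivative (hermite (n + 1)) = ((n + 1 : ℕ) : ℤ[X]) * hermite n := by
  induction n with
  | zero => simp
  | succ n ih =>
    rw [hermite_succ (n + 1), derivative_sub, derivative_mul, derivative_X, one_mul, ih,
      derivative_mul, derivative_natCast, zero_mul, zero_add, hermite_succ n]
    push_cast
    ring

end Polynomial

noncomputable def realHermite (n : ℕ) : ℝ[X] := (hermite n).map (algebraMap ℤ ℝ)

theorem realHermite_zero : realHermite 0 = 1 := by simp [realHermite]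

theorem realHermite_succ (n : ℕ) :
    realHermite (n + 1) = X * realHermite n - derivative (realHermite n) := by
  simp [realHermite, hermite_succ, derivative_map]

theorem derivative_realHermite_succ (n : ℕ) :
    derivative (realHermite (n + 1)) = ((n + 1 : ℕ) : ℝ[X]) * realHermite n := by
  rw [realHermite, realHermite, derivative_map, derivative_hermite_succ, Polynomial.map_mul,
    Polynomial.map_natCast]

theorem normHermite_eq_eval_realHermite (n : ℕ) (x : ℝ) :
    normHermite n x = (√(n ! : ℝ))⁻¹ * (realHermite n).eval x := by
  rw [normHermite, realHermite, eval_map_algebraMap, div_eq_inv_mul]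

theorem continuous_normHermite (n : ℕ) : Continuous (normHermite n) :=
  (Polynomial.continuous_aeval _).div_const _

theorem sq_div_sqrt_mul_le_one {σ11 σ12 σ22 : ℝ} (hpsd : σ12 ^ 2 ≤ σ11 * σ22) :
    (σ12 / √(σ11 * σ22)) ^ 2 ≤ 1 := by
  have h : 0 ≤ σ11 * σ22 := (sq_nonneg σ12).trans hpsd
  rw [div_pow, sq_sqrt h]
  exact div_le_one_of_le₀ hpsd h

namespace ProbabilityTheory

theorem integrable_pow_gaussianReal (μ : ℝ) (v : ℝ≥0) (n : ℕ) :
    Integrable (fun x : ℝ ↦ x ^ n) (gaussianReal μ v) := by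
  have := (memLp_id_gaussianReal (μ := μ) (v := v) n).integrable_norm_pow'
  exact (integrable_norm_iff (by fun_prop)).1 (by simpa only [norm_pow, id_eq] using this)

theorem integrable_gaussianReal_iff {μ : ℝ} {v : ℝ≥0} (hv : v ≠ 0) {f : ℝ → ℝ} :
    Integrable f (gaussianReal μ v) ↔ Integrable (fun x ↦ gaussianPDFReal μ v x * f x) := by
  rw [gaussianReal_of_var_ne_zero _ hv, integrable_withDensity_iff_integrable_smul'
    (measurable_gaussianPDF _ _) (ae_of_all _ fun _ ↦ gaussianPDF_lt_top)]
  simp [gaussianPDF, gaussianPDFReal_nonneg]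

theorem hasDerivAt_gaussianPDFReal (μ : ℝ) (v : ℝ≥0) (x : ℝ) :
    HasDerivAt (gaussianPDFReal μ v) (-(x - μ) / v * gaussianPDFReal μ v x) x := by
  have h : HasDerivAt (fun y : ℝ ↦ -(y - μ) ^ 2 / (2 * v)) (-(x - μ) / v) x :=
    ((((hasDerivAt_id x).sub_const μ).pow 2).fun_neg.div_const _).congr_deriv (by
      simp only [Nat.cast_ofNat, id_eq, Nat.add_one_sub_one, pow_one, mul_one]; ring)
  exact (h.exp.const_mul _).congr_deriv (by rw [gaussianPDFReal]; ring)

-- Stein's identity: integrate by parts against the density `φ`, using `φ' = -x φ`.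
theorem integral_mul_eval_gaussianReal (P : ℝ[X]) :
    ∫ x, x * P.eval x ∂(gaussianReal 0 1) = ∫ x, (derivative P).eval x ∂(gaussianReal 0 1) := by
  have hint (Q : ℝ[X]) : Integrable (fun x ↦ gaussianPDFReal 0 1 x * Q.eval x) :=
    (integrable_gaussianReal_iff one_ne_zero).1
      (integrable_eval_comp (integrable_pow_gaussianReal 0 1) Q)
  have hparts := integral_mul_deriv_eq_deriv_mul_of_integrable
    (u := fun x ↦ P.eval x) (u' := fun x ↦ (derivative P).eval x)
    (v := gaussianPDFReal 0 1) (v' := fun x ↦ -x * gaussianPDFReal 0 1 x)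
    (fun x _ ↦ P.hasDerivAt x)
    (fun x _ ↦ (hasDerivAt_gaussianPDFReal 0 1 x).congr_deriv (by simp))
    ((hint (-(X * P))).congr (ae_of_all _ fun x ↦ by
      simp only [Pi.mul_apply, eval_neg, eval_mul, eval_X]; ring))
    ((hint (derivative P)).congr (ae_of_all _ fun x ↦ by simp only [Pi.mul_apply]; ring))
    ((hint P).congr (ae_of_all _ fun x ↦ by simp only [Pi.mul_apply]; ring))
  simp only [integral_gaussianReal_eq_integral_smul one_ne_zero, smul_eq_mul]
  calc ∫ x, gaussianPDFReal 0 1 x * (x * P.eval x)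
      = -∫ x, P.eval x * (-x * gaussianPDFReal 0 1 x) := by
        rw [← integral_neg]; congr 1; ext x; ring
    _ = ∫ x, gaussianPDFReal 0 1 x * (derivative P).eval x := by
        rw [hparts, neg_neg]; congr 1; ext x; ring

theorem integral_realHermite_succ_mul_eval_gaussianReal (k : ℕ) (Q : ℝ[X]) :
    ∫ x, (realHermite (k + 1)).eval x * Q.eval x ∂(gaussianReal 0 1) =
      ∫ x, (realHermite k).eval x * (derivative Q).eval x ∂(gaussianReal 0 1) := by
  have hsub (R S : ℝ[X]) : ∫ x, (R - S).eval x ∂(gaussianReal 0 1) =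
      ∫ x, R.eval x ∂(gaussianReal 0 1) - ∫ x, S.eval x ∂(gaussianReal 0 1) := by
    simp only [eval_sub]
    exact integral_sub (integrable_eval_comp (integrable_pow_gaussianReal 0 1) R)
      (integrable_eval_comp (integrable_pow_gaussianReal 0 1) S)
  set H := realHermite k
  calc ∫ x, (realHermite (k + 1)).eval x * Q.eval x ∂(gaussianReal 0 1)
      = ∫ x, (X * (H * Q) - derivative H * Q).eval x ∂(gaussianReal 0 1) := by
        simp only [realHermite_succ, eval_sub, eval_mul, eval_X, H]; congr 1; ext; ring
    _ = ∫ x, (derivative (H * Q) - derivative H * Q).eval x ∂(gaussianReal 0 1) := by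
        rw [hsub, hsub, ← integral_mul_eval_gaussianReal]
        simp only [eval_mul, eval_X]
    _ = ∫ x, H.eval x * (derivative Q).eval x ∂(gaussianReal 0 1) := by
        simp only [derivative_mul, add_sub_cancel_left, eval_mul]

theorem integral_realHermite_gaussianReal (n : ℕ) :
    ∫ x, (realHermite n).eval x ∂(gaussianReal 0 1) = if n = 0 then 1 else 0 := by
  cases n with
  | zero => simp [realHermite_zero]
  | succ n => simpa using integral_realHermite_succ_mul_eval_gaussianReal n 1

theorem map_linear_prod_gaussianReal (c d : ℝ) :
    ((gaussianReal 0 1).prod (gaussianReal 0 1)).map (fun z : ℝ × ℝ ↦ c * z.1 + d * z.2) =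
      gaussianReal 0 (c ^ 2 + d ^ 2).toNNReal := by
  have hfst : ((gaussianReal 0 1).prod (gaussianReal 0 1)).map (fun z ↦ c * z.1) =
      gaussianReal 0 (.mk (c ^ 2) (sq_nonneg c) * 1) := by
    rw [← Function.comp_def (c * ·) Prod.fst, ← Measure.map_map (by fun_prop) measurable_fst,
      Measure.map_fst_prod, measure_univ, one_smul, gaussianReal_map_const_mul, mul_zero]
  have hsnd : ((gaussianReal 0 1).prod (gaussianReal 0 1)).map (fun z ↦ d * z.2) =
      gaussianReal 0 (.mk (d ^ 2) (sq_nonneg d) * 1) := by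
    rw [← Function.comp_def (d * ·) Prod.snd, ← Measure.map_map (by fun_prop) measurable_snd,
      Measure.map_snd_prod, measure_univ, one_smul, gaussianReal_map_const_mul, mul_zero]
  have hsum := gaussianReal_add_gaussianReal_of_indepFun
    (indepFun_prod (μ := gaussianReal 0 1) (ν := gaussianReal 0 1) (measurable_const_mul c)
      (measurable_const_mul d)) hfst hsnd
  rw [add_zero] at hsum
  rw [show (fun z : ℝ × ℝ ↦ c * z.1 + d * z.2) = (fun z ↦ c * z.1) + (fun z ↦ d * z.2) from rfl,
    hsum]
  congr 1
  rw [← NNReal.coe_inj]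
  simp only [NNReal.coe_add, NNReal.coe_mk, mul_one,
    Real.coe_toNNReal _ (by positivity : 0 ≤ c ^ 2 + d ^ 2)]

/-- For `ρ ^ 2 ≤ 1`, the centred Gaussian law on `ℝ × ℝ` with unit variances and correlation `ρ`. -/
noncomputable def stdBivariateGaussian (ρ : ℝ) : Measure (ℝ × ℝ) :=
  ((gaussianReal 0 1).prod (gaussianReal 0 1)).map fun z ↦ (z.1, ρ * z.1 + √(1 - ρ ^ 2) * z.2)

instance (ρ : ℝ) : IsProbabilityMeasure (stdBivariateGaussian ρ) :=
  Measure.isProbabilityMeasure_map (by fun_prop)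

variable {ρ : ℝ}

theorem stdBivariateGaussian_map_linear (hρ : ρ ^ 2 ≤ 1) (a b : ℝ) :
    (stdBivariateGaussian ρ).map (fun p ↦ a * p.1 + b * p.2) =
      gaussianReal 0 (a ^ 2 + 2 * a * b * ρ + b ^ 2).toNNReal := by
  rw [stdBivariateGaussian, Measure.map_map (by fun_prop) (by fun_prop)]
  convert map_linear_prod_gaussianReal (a + b * ρ) (b * √(1 - ρ ^ 2)) using 3
  · simp only [Function.comp_apply]; ring
  · rw [mul_pow, sq_sqrt (by linarith)]; ring

theorem eq_stdBivariateGaussian_of_map_linear {μ : Measure (ℝ × ℝ)} [IsFiniteMeasure μ]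
    (hρ : ρ ^ 2 ≤ 1) (h : ∀ a b : ℝ, μ.map (fun p ↦ a * p.1 + b * p.2) =
      gaussianReal 0 (a ^ 2 + 2 * a * b * ρ + b ^ 2).toNNReal) :
    μ = stdBivariateGaussian ρ := by
  refine Measure.ext_of_charFunDual (funext fun L ↦ ?_)
  have hL : ⇑L = fun p : ℝ × ℝ ↦ L (1, 0) * p.1 + L (0, 1) * p.2 := by
    ext p
    have hp : p = p.1 • ((1 : ℝ), (0 : ℝ)) + p.2 • ((0 : ℝ), (1 : ℝ)) := by ext <;> simp
    conv_lhs => rw [hp, map_add, map_smul, map_smul, smul_eq_mul, smul_eq_mul]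
    ring
  rw [charFunDual_eq_charFun_map_one, charFunDual_eq_charFun_map_one, hL, h,
    stdBivariateGaussian_map_linear hρ]

theorem integrable_eval_mul_eval_stdBivariateGaussian (hρ : ρ ^ 2 ≤ 1) (P Q : ℝ[X]) :
    Integrable (fun p ↦ P.eval p.1 * Q.eval p.2) (stdBivariateGaussian ρ) := by
  have hpow (a b : ℝ) (n : ℕ) :
      Integrable (fun p ↦ (a * p.1 + b * p.2) ^ n) (stdBivariateGaussian ρ) := by
    have := integrable_pow_gaussianReal 0 (a ^ 2 + 2 * a * b * ρ + b ^ 2).toNNReal n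
    rwa [← stdBivariateGaussian_map_linear hρ,
      integrable_map_measure (by fun_prop) (by fun_prop)] at this
  exact integrable_eval_comp_mul_eval_comp (by simpa using hpow 1 0) (by simpa using hpow 0 1) P Q

-- Fubini, then the one-variable identity for `x ↦ Q (ρ x + √(1 - ρ²) y)`; the chain rule gives `ρ`.
theorem integral_realHermite_succ_mul_eval_stdBivariateGaussian (hρ : ρ ^ 2 ≤ 1) (k : ℕ)
    (Q : ℝ[X]) :
    ∫ p, (realHermite (k + 1)).eval p.1 * Q.eval p.2 ∂(stdBivariateGaussian ρ) =
      ρ * ∫ p, (realHermite k).eval p.1 * (derivative Q).eval p.2 ∂(stdBivariateGaussian ρ) := by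
  set s := √(1 - ρ ^ 2)
  have hprod (P R : ℝ[X]) : Integrable (fun z : ℝ × ℝ ↦ P.eval z.1 * R.eval (ρ * z.1 + s * z.2))
      ((gaussianReal 0 1).prod (gaussianReal 0 1)) :=
    (integrable_map_measure (by fun_prop) (by fun_prop)).1
      (integrable_eval_mul_eval_stdBivariateGaussian hρ P R)
  simp only [stdBivariateGaussian]
  rw [integral_map (by fun_prop) (by fun_prop), integral_map (by fun_prop) (by fun_prop),
    integral_prod_symm _ (hprod _ _), integral_prod_symm _ (hprod _ _), ← integral_const_mul]
  congr 1
  ext y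
  have h := integral_realHermite_succ_mul_eval_gaussianReal k (Q.comp (C ρ * X + C (s * y)))
  simp only [eval_comp, derivative_comp, derivative_add, derivative_C_mul_X, derivative_C,
    add_zero, eval_mul, eval_add, eval_C, eval_X] at h
  rw [h, ← integral_const_mul]
  congr 1; ext x; ring

theorem integral_realHermite_mul_realHermite_stdBivariateGaussian (hρ : ρ ^ 2 ≤ 1) (k l : ℕ) :
    ∫ p, (realHermite k).eval p.1 * (realHermite l).eval p.2 ∂(stdBivariateGaussian ρ) =
      if k = l then (k ! : ℝ) * ρ ^ k else 0 := by
  induction k generalizing l with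
  | zero =>
    have hsnd : (stdBivariateGaussian ρ).map Prod.snd = gaussianReal 0 1 := by
      simpa using stdBivariateGaussian_map_linear hρ 0 1
    simp only [realHermite_zero, eval_one, one_mul]
    rw [← integral_map measurable_snd.aemeasurable (realHermite l).continuous.aestronglyMeasurable,
      hsnd, integral_realHermite_gaussianReal]
    simp [eq_comm]
  | succ k ih =>
    rw [integral_realHermite_succ_mul_eval_stdBivariateGaussian hρ]
    cases l with
    | zero => simp [realHermite_zero]
    | succ l =>
      simp only [derivative_realHermite_succ, eval_mul, eval_natCast,
        mul_left_comm _ ((l + 1 : ℕ) : ℝ)]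
      rw [integral_const_mul, ih]
      split_ifs with hkl hkl' hkl'
      · subst hkl; push_cast [Nat.factorial_succ]; ring
      · omega
      · omega
      · simp

theorem integral_normHermite_mul_normHermite_stdBivariateGaussian (hρ : ρ ^ 2 ≤ 1) (k l : ℕ) :
    ∫ p, normHermite k p.1 * normHermite l p.2 ∂(stdBivariateGaussian ρ) =
      if k = l then ρ ^ k else 0 := by
  have hprod (p : ℝ × ℝ) : normHermite k p.1 * normHermite l p.2 =
      ((√(k ! : ℝ))⁻¹ * (√(l ! : ℝ))⁻¹) *
        ((realHermite k).eval p.1 * (realHermite l).eval p.2) := by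
    rw [normHermite_eq_eval_realHermite, normHermite_eq_eval_realHermite]; ring
  simp_rw [hprod, integral_const_mul, integral_realHermite_mul_realHermite_stdBivariateGaussian hρ]
  split_ifs with hkl
  · subst hkl
    have hk : (0 : ℝ) < k ! := by positivity
    rw [← mul_inv, mul_self_sqrt hk.le, ← mul_assoc, inv_mul_cancel₀ hk.ne', one_mul]
  · rw [mul_zero]

theorem map_div_sqrt_eq_stdBivariateGaussian {Ω : Type*} [MeasurableSpace Ω] {P : Measure Ω}
    [IsFiniteMeasure P] {U V : Ω → ℝ} (hU : Measurable U) (hV : Measurable V)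
    {σ11 σ12 σ22 : ℝ} (h11 : 0 < σ11) (h22 : 0 < σ22) (hpsd : σ12 ^ 2 ≤ σ11 * σ22)
    (hGauss : ∀ a b : ℝ, P.map (fun ω ↦ a * U ω + b * V ω) =
      gaussianReal 0 (a ^ 2 * σ11 + 2 * a * b * σ12 + b ^ 2 * σ22).toNNReal) :
    P.map (fun ω ↦ (U ω / √σ11, V ω / √σ22)) = stdBivariateGaussian (σ12 / √(σ11 * σ22)) := by
  refine eq_stdBivariateGaussian_of_map_linear (sq_div_sqrt_mul_le_one hpsd) fun a b ↦ ?_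
  rw [Measure.map_map (by fun_prop) (by fun_prop)]
  convert hGauss (a / √σ11) (b / √σ22) using 3
  · simp only [Function.comp_apply]; ring
  · have hu : 0 < √σ11 := sqrt_pos.2 h11
    have hv : 0 < √σ22 := sqrt_pos.2 h22
    rw [sqrt_mul h11.le, div_pow, div_pow, sq_sqrt h11.le, sq_sqrt h22.le]
    field_simp

end ProbabilityTheory

/-- Let `(U, V)` be a centered bivariate Gaussian vector with covariance matrix
`[[σ₁₁, σ₁₂], [σ₁₂, σ₂₂]]` (`σ₁₁, σ₂₂ > 0`, positive semidefinite); joint Gaussianity is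
expressed by the requirement that every linear combination `aU + bV` is a centered Gaussian
with the appropriate variance. Then
`E[H_k(U/√σ₁₁) H_l(V/√σ₂₂)] = δ_{kl} (σ₁₂/√(σ₁₁σ₂₂))^k`. -/
theorem expectation_normHermite_bivariate_gaussian
    {Ω : Type*} [MeasureSpace Ω] [IsProbabilityMeasure (ℙ : Measure Ω)]
    (U V : Ω → ℝ) (hU : Measurable U) (hV : Measurable V)
    (σ11 σ12 σ22 : ℝ) (h11 : 0 < σ11) (h22 : 0 < σ22) (hpsd : σ12 ^ 2 ≤ σ11 * σ22)
    (hGauss : ∀ a b : ℝ,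
      Measure.map (fun ω => a * U ω + b * V ω) ℙ =
        gaussianReal 0 (Real.toNNReal (a ^ 2 * σ11 + 2 * a * b * σ12 + b ^ 2 * σ22)))
    (k l : ℕ) :
    ∫ ω, normHermite k (U ω / Real.sqrt σ11) * normHermite l (V ω / Real.sqrt σ22) ∂ℙ =
      if k = l then (σ12 / Real.sqrt (σ11 * σ22)) ^ k else 0 := by
  have hρ := sq_div_sqrt_mul_le_one hpsd
  have hW : Measurable fun ω ↦ (U ω / √σ11, V ω / √σ22) := by fun_prop
  rw [← integral_normHermite_mul_normHermite_stdBivariateGaussian hρ,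
    ← map_div_sqrt_eq_stdBivariateGaussian hU hV h11 h22 hpsd hGauss]
  exact (integral_map hW.aemeasurable
    ((continuous_normHermite k).fst'.mul (continuous_normHermite l).snd').aestronglyMeasurable).symm
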